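/- arXiv:1406.1610 — 2 statements merged into one kernel-verified Lean document; each statement's English description precedes it below -/
import Mathlib

section
/- Let N ≥ 2 and let h_{N,1} < … < h_{N,N} be the N zeros of the N-th physicists' Hermite polynomial H_N. Then ∏_{i=1}^N H_{N−1}(h_{N,i}) = (−2)^{N(N−1)/2} ∏_{j=1}^{N−1} j^j. -/
/-
Write `H_n` for the physicists' Hermite polynomial; it has degree `n` and leading coefficient
`2^n`. Let `x_1 < … < x_{n+1}` be the zeros of `H_{n+1}`. Since `H_{n+1}' = 2(n+1) H_n`, Rolle's
theorem puts a zero `y_j` of `H_n` between `x_j` and `x_{j+1}`, and these are all `n` zeros of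
`H_n`. Expanding both polynomials over their zeros, `∏ᵢ H_n(x_i)` and `∏ⱼ H_{n+1}(y_j)` are both
`2^{n(n+1)} ∏ᵢⱼ (x_i - y_j)`, up to the even sign `(-1)^{n(n+1)}`, hence equal. At a zero of `H_n`
the three-term recurrence reads `H_{n+1} = -2n H_{n-1}`, so
`∏ᵢ H_n(x_i) = (-2n)^n ∏ⱼ H_{n-1}(y_j)`, and induction on `n` gives `∏_{j=1}^{n} (-2j)^j`.
-/

open Finset

/-- The physicists' Hermite polynomial `H_N(x) = (−1)^N e^{x²} (d/dx)^N e^{−x²}`. -/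
noncomputable def physHermite (N : ℕ) (x : ℝ) : ℝ :=
  (-1 : ℝ) ^ N * Real.exp (x ^ 2) * iteratedDeriv N (fun y => Real.exp (-(y ^ 2))) x

open Polynomial

namespace Polynomial

variable {R ι κ : Type*} [Fintype ι] [Fintype κ]

theorem C_leadingCoeff_mul_prod_X_sub_C_of_injective [CommRing R] [IsDomain R] {p : R[X]}
    {x : ι → R} (hx : Function.Injective x) (hroot : ∀ i, p.IsRoot (x i))
    (hdeg : p.natDegree ≤ Fintype.card ι) :
    C p.leadingCoeff * ∏ i, (X - C (x i)) = p := by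
  rcases eq_or_ne p 0 with rfl | hp
  · simp
  have hle : univ.val.map x ≤ p.roots :=
    (Multiset.le_iff_subset (univ.nodup.map hx)).2 fun a ha => by
      obtain ⟨i, -, rfl⟩ := Multiset.mem_map.1 ha
      exact (mem_roots hp).2 (hroot i)
  have hroots : univ.val.map x = p.roots :=
    Multiset.eq_of_le_of_card_le hle <| by
      simpa using (card_roots' p).trans hdeg
  have hcard : Multiset.card p.roots = p.natDegree :=
    le_antisymm (card_roots' p) (by simpa [← hroots] using hdeg)
  conv_rhs => rw [← C_leadingCoeff_mul_prod_multiset_X_sub_C hcard, ← hroots, Multiset.map_map]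
  rfl

theorem prod_eval_prod_X_sub_C_comm [CommRing R] (x : ι → R) (y : κ → R) :
    ∏ i, (∏ j, (X - C (y j))).eval (x i)
      = (-1) ^ (Fintype.card ι * Fintype.card κ) * ∏ j, (∏ i, (X - C (x i))).eval (y j) := by
  simp only [eval_prod, eval_sub, eval_X, eval_C]
  rw [prod_comm]
  simp only [← neg_sub (y _) (x _), prod_neg, prod_mul_distrib, prod_const, card_univ, pow_mul]

theorem leadingCoeff_pow_mul_prod_eval_comm [CommRing R] [IsDomain R] {p q : R[X]}
    {x : ι → R} {y : κ → R} (hx : Function.Injective x) (hpx : ∀ i, p.IsRoot (x i))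
    (hp : p.natDegree ≤ Fintype.card ι) (hy : Function.Injective y)
    (hqy : ∀ j, q.IsRoot (y j)) (hq : q.natDegree ≤ Fintype.card κ) :
    p.leadingCoeff ^ Fintype.card κ * ∏ i, q.eval (x i)
      = (-1) ^ (Fintype.card ι * Fintype.card κ) * q.leadingCoeff ^ Fintype.card ι
          * ∏ j, p.eval (y j) := by
  have hp' := C_leadingCoeff_mul_prod_X_sub_C_of_injective hx hpx hp
  have hq' := C_leadingCoeff_mul_prod_X_sub_C_of_injective hy hqy hq
  generalize p.leadingCoeff = a at hp' ⊢
  generalize q.leadingCoeff = b at hq' ⊢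
  subst hp' hq'
  simp only [eval_mul, eval_C, prod_mul_distrib, prod_const, card_univ]
  rw [prod_eval_prod_X_sub_C_comm]
  ring

theorem exists_strictMono_isRoot_derivative {n : ℕ} (p : ℝ[X]) {x : Fin (n + 1) → ℝ}
    (hx : StrictMono x) (hroot : ∀ i, p.IsRoot (x i)) :
    ∃ y : Fin n → ℝ, StrictMono y ∧ ∀ j, p.derivative.IsRoot (y j) := by
  have rolle : ∀ j : Fin n, ∃ c ∈ Set.Ioo (x j.castSucc) (x j.succ), p.derivative.IsRoot c :=
    fun j => by
      obtain ⟨c, hc, hc0⟩ := exists_deriv_eq_zero (hx j.castSucc_lt_succ) p.continuousOn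
        ((hroot _).trans (hroot _).symm)
      exact ⟨c, hc, by rwa [Polynomial.deriv] at hc0⟩
  choose y hy hyroot using rolle
  refine ⟨y, fun j k hjk => ?_, hyroot⟩
  calc y j < x j.succ := (hy j).2
    _ ≤ x k.castSucc := hx.monotone (Fin.succ_le_castSucc_iff.2 hjk)
    _ < y k := (hy k).1

end Polynomial

noncomputable def physHermitePoly : ℕ → ℝ[X]
  | 0 => 1
  | n + 1 => 2 * X * physHermitePoly n - derivative (physHermitePoly n)

@[simp] theorem physHermitePoly_zero : physHermitePoly 0 = 1 := rfl

theorem physHermitePoly_succ (n : ℕ) :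
    physHermitePoly (n + 1) = 2 * X * physHermitePoly n - derivative (physHermitePoly n) := rfl

theorem natDegree_physHermitePoly_le (n : ℕ) : (physHermitePoly n).natDegree ≤ n := by
  induction n with
  | zero => simp
  | succ n ih =>
    refine (natDegree_sub_le _ _).trans (max_le ?_ ?_)
    · exact (natDegree_mul_le_of_le (by compute_degree) ih).trans_eq (add_comm _ _)
    · exact (natDegree_derivative_le _).trans (by omega)

theorem coeff_physHermitePoly_self (n : ℕ) : (physHermitePoly n).coeff n = 2 ^ n := by
  induction n with
  | zero => simp
  | succ n ih =>
    have hderiv : (derivative (physHermitePoly n)).coeff (n + 1) = 0 :=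
      coeff_eq_zero_of_natDegree_lt <|
        (natDegree_derivative_le _).trans_lt (by have := natDegree_physHermitePoly_le n; omega)
    rw [physHermitePoly_succ, coeff_sub, hderiv, mul_assoc, coeff_ofNat_mul, coeff_X_mul, ih,
      sub_zero, pow_succ']

theorem natDegree_physHermitePoly (n : ℕ) : (physHermitePoly n).natDegree = n :=
  (natDegree_physHermitePoly_le n).antisymm <|
    le_natDegree_of_ne_zero (by rw [coeff_physHermitePoly_self]; positivity)

theorem leadingCoeff_physHermitePoly (n : ℕ) : (physHermitePoly n).leadingCoeff = 2 ^ n := by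
  rw [leadingCoeff, natDegree_physHermitePoly, coeff_physHermitePoly_self]

theorem derivative_physHermitePoly_succ (n : ℕ) :
    derivative (physHermitePoly (n + 1)) = 2 * (n + 1 : ℝ[X]) * physHermitePoly n := by
  induction n with
  | zero => simp [physHermitePoly_succ]
  | succ n ih =>
    simp only [physHermitePoly_succ (n + 1), derivative_sub, derivative_mul, derivative_ofNat,
      derivative_X, derivative_add, derivative_natCast, derivative_one, ih]
    rw [physHermitePoly_succ n]
    push_cast
    ring

theorem physHermitePoly_add_two (n : ℕ) :
    physHermitePoly (n + 2)
      = 2 * X * physHermitePoly (n + 1) - 2 * (n + 1 : ℝ[X]) * physHermitePoly n := by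
  rw [physHermitePoly_succ (n + 1), derivative_physHermitePoly_succ]

theorem iteratedDeriv_gaussian (n : ℕ) :
    iteratedDeriv n (fun y => Real.exp (-(y ^ 2)))
      = fun x => (-1) ^ n * (physHermitePoly n).eval x * Real.exp (-(x ^ 2)) := by
  induction n with
  | zero => simp
  | succ n ih =>
    ext x
    have hgauss : HasDerivAt (fun y => Real.exp (-(y ^ 2))) (Real.exp (-(x ^ 2)) * -(2 * x)) x := by
      simpa using (hasDerivAt_pow 2 x).neg.exp
    rw [iteratedDeriv_succ, ih, ((((physHermitePoly n).hasDerivAt x).const_mul ((-1) ^ n)).fun_mul hgauss).deriv,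
      physHermitePoly_succ]
    simp only [eval_sub, eval_mul, eval_ofNat, eval_X]
    ring

theorem physHermite_eq_eval (n : ℕ) (x : ℝ) : physHermite n x = (physHermitePoly n).eval x := by
  have hexp : Real.exp (x ^ 2) * Real.exp (-(x ^ 2)) = 1 := by
    rw [← Real.exp_add, add_neg_cancel, Real.exp_zero]
  have hsign : ((-1 : ℝ) ^ n) ^ 2 = 1 := by rw [sq, ← mul_pow]; simp
  rw [physHermite, iteratedDeriv_gaussian]
  linear_combination (physHermitePoly n).eval x * (((-1) ^ n) ^ 2 * hexp + hsign)

theorem isRoot_physHermitePoly_of_isRoot_derivative {n : ℕ} {x : ℝ}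
    (hx : (derivative (physHermitePoly (n + 1))).IsRoot x) : (physHermitePoly n).IsRoot x := by
  rw [derivative_physHermitePoly_succ, IsRoot, eval_mul] at hx
  refine (mul_eq_zero.1 hx).resolve_left ?_
  simp only [eval_mul, eval_ofNat, eval_add, eval_natCast, eval_one]
  positivity

theorem eval_physHermitePoly_add_two_of_isRoot {n : ℕ} {x : ℝ}
    (hx : (physHermitePoly (n + 1)).IsRoot x) :
    (physHermitePoly (n + 2)).eval x = -2 * (n + 1) * (physHermitePoly n).eval x := by
  rw [physHermitePoly_add_two]
  simp only [eval_sub, eval_mul, eval_ofNat, eval_X, eval_add, eval_natCast, eval_one, hx.eq_zero]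
  ring

theorem prod_eval_physHermitePoly_succ_comm {n : ℕ} {x : Fin (n + 2) → ℝ} {y : Fin (n + 1) → ℝ}
    (hx : Function.Injective x) (hxroot : ∀ i, (physHermitePoly (n + 2)).IsRoot (x i))
    (hy : Function.Injective y) (hyroot : ∀ j, (physHermitePoly (n + 1)).IsRoot (y j)) :
    ∏ i, (physHermitePoly (n + 1)).eval (x i) = ∏ j, (physHermitePoly (n + 2)).eval (y j) := by
  have hcomm := leadingCoeff_pow_mul_prod_eval_comm hx hxroot
    (by simp [natDegree_physHermitePoly]) hy hyroot (by simp [natDegree_physHermitePoly])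
  have hsign : (-1 : ℝ) ^ ((n + 2) * (n + 1)) = 1 :=
    Even.neg_one_pow (by rw [mul_comm]; exact Nat.even_mul_succ_self (n + 1))
  rw [leadingCoeff_physHermitePoly, leadingCoeff_physHermitePoly, Fintype.card_fin,
    Fintype.card_fin, hsign, one_mul, ← pow_mul, ← pow_mul, mul_comm (n + 2)] at hcomm
  exact mul_left_cancel₀ (by positivity) hcomm

theorem prod_eval_physHermitePoly_at_roots_of_succ (n : ℕ) {x : Fin (n + 1) → ℝ}
    (hx : StrictMono x) (hroot : ∀ i, (physHermitePoly (n + 1)).IsRoot (x i)) :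
    ∏ i, (physHermitePoly n).eval (x i) = ∏ j ∈ Icc 1 n, (-2 * j : ℝ) ^ j := by
  induction n with
  | zero => simp
  | succ n ih =>
    obtain ⟨y, hy, hyroot⟩ := exists_strictMono_isRoot_derivative _ hx hroot
    replace hyroot := fun j => isRoot_physHermitePoly_of_isRoot_derivative (hyroot j)
    calc ∏ i, (physHermitePoly (n + 1)).eval (x i)
        = ∏ j, (physHermitePoly (n + 2)).eval (y j) :=
          prod_eval_physHermitePoly_succ_comm hx.injective hroot hy.injective hyroot
      _ = ∏ j, (-2 * (n + 1) : ℝ) * (physHermitePoly n).eval (y j) :=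
          prod_congr rfl fun j _ => eval_physHermitePoly_add_two_of_isRoot (hyroot j)
      _ = ∏ j ∈ Icc 1 (n + 1), (-2 * j : ℝ) ^ j := by
          rw [prod_mul_distrib, prod_const, card_univ, Fintype.card_fin, ih hy hyroot,
            prod_Icc_succ_top (by omega), mul_comm]
          push_cast
          ring

theorem prod_Icc_neg_two_mul_pow_self (n : ℕ) :
    ∏ j ∈ Icc 1 n, (-2 * j : ℝ) ^ j = (-2) ^ ((n + 1) * n / 2) * ∏ j ∈ Icc 1 n, (j : ℝ) ^ j := by
  have hsum : ∑ j ∈ Icc 1 n, j = (n + 1) * n / 2 := by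
    have := sum_range_id (n + 1)
    rwa [range_eq_Ico, sum_eq_sum_Ico_succ_bot (by omega), Ico_add_one_right_eq_Icc, zero_add,
      Nat.add_sub_cancel] at this
  simp_rw [mul_pow, prod_mul_distrib]
  rw [prod_pow_eq_pow_sum, hsum]

theorem prod_hermite_pred_at_zeros_general (N : ℕ) (h : Fin N → ℝ)
    (hmono : StrictMono h)
    (hzero : ∀ i, physHermite N (h i) = 0) :
    ∏ i, physHermite (N - 1) (h i)
      = (-2 : ℝ) ^ (N * (N - 1) / 2) * ∏ j ∈ Finset.Icc 1 (N - 1), (j : ℝ) ^ j := by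
  cases N with
  | zero => simp
  | succ n =>
    simp only [physHermite_eq_eval, Nat.add_sub_cancel] at hzero ⊢
    rw [prod_eval_physHermitePoly_at_roots_of_succ n hmono hzero, prod_Icc_neg_two_mul_pow_self]

/-- `∏_{i=1}^N H_{N−1}(h_{N,i}) = (−2)^{N(N−1)/2} ∏_{j=1}^{N−1} j^j`. -/
theorem prod_hermite_pred_at_zeros (N : ℕ) (hN : 2 ≤ N) (h : Fin N → ℝ)
    (hmono : StrictMono h)
    (hzero : ∀ i, physHermite N (h i) = 0)
    (hall : ∀ x : ℝ, physHermite N x = 0 → ∃ i, x = h i) :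
    ∏ i, physHermite (N - 1) (h i)
      = (-2 : ℝ) ^ (N * (N - 1) / 2) * ∏ j ∈ Finset.Icc 1 (N - 1), (j : ℝ) ^ j :=
  prod_hermite_pred_at_zeros_general N h hmono hzero
end

section
/- Let N ≥ 2 and α > −1, and let l_{N,1} < … < l_{N,N} denote the N zeros of the generalized Laguerre polynomial L_N^{(α)}. Then ∏_{i=1}^N L_{N−1}^{(α)}(l_{N,i}) = (−1)^{N(N−1)/2} ∏_{i=1}^{N−1} ((α + i)/(N − i))^{i}. -/
/-!
Up to the factor `lc(L_N)^(N-1)`, the product of `L_{N-1}` over the zeros of `L_N` is the resultant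
`Res(L_N, L_{N-1})`. The three-term recurrence
`(N+2) L_{N+2} = (α + 2N + 3 - X) L_{N+1} - (α + N + 1) L_N` says that `(N+2) L_{N+2}` is congruent
to `-(α + N + 1) L_N` modulo `L_{N+1}`, so `Res(L_{N+2}, L_{N+1})` is an explicit multiple of
`Res(L_{N+1}, L_N)`. Solving this recursion gives the closed form.
-/

open Finset

/-- The generalized Laguerre polynomial
`L_N^{(α)}(x) = ∑_{k=0}^N (−1)^k binom(N+α, N−k) x^k / k!`, where
`binom(N+α, N−k) = (∏_{i=k+1}^N (α+i)) / (N−k)!`. -/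
noncomputable def laguerre (N : ℕ) (α : ℝ) (x : ℝ) : ℝ :=
  ∑ k ∈ Finset.range (N + 1),
    (-1 : ℝ) ^ k * (∏ i ∈ Finset.Icc (k + 1) N, (α + i))
      / ((Nat.factorial (N - k)) * (Nat.factorial k)) * x ^ k

open Polynomial Nat

theorem prod_Icc_one_pow_eq_prod_range {M : Type*} [CommMonoid M] (f : ℕ → M) (N : ℕ) :
    ∏ i ∈ Icc 1 (N - 1), f i ^ i = ∏ i ∈ range N, f i ^ i := by
  rcases N with _ | N
  · simp
  rw [range_eq_Ico, prod_eq_prod_Ico_succ_bot (succ_pos N), pow_zero, one_mul, add_tsub_cancel_right]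
  rfl

theorem prod_range_natCast_sub_pow_succ {R : Type*} [CommRing R] (N : ℕ) :
    ∏ i ∈ range (N + 1), ((N : R) + 1 - i) ^ i = N ! * ∏ i ∈ range N, ((N : R) - i) ^ i := by
  rw [prod_range_succ', ← descFactorial_self, descFactorial_eq_prod_range, ← Finset.prod_range_natCast_sub,
    ← prod_mul_distrib]
  push_cast
  simp only [add_sub_add_right_eq_sub, pow_succ, pow_zero, mul_one]
  exact prod_congr rfl fun i _ => mul_comm _ _

theorem resultant_eq_leadingCoeff_pow_mul_prod_eval {R : Type*} [CommRing R] [IsDomain R]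
    {p q : R[X]} {N n : ℕ} {l : Fin N → R} (hp : p ≠ 0) (hpN : p.natDegree = N) (hqn : q.natDegree ≤ n)
    (hl : Function.Injective l) (hroot : ∀ i, p.eval (l i) = 0) :
    resultant p q N n = p.leadingCoeff ^ n * ∏ i, q.eval (l i) := by
  have hroots : p.roots = (univ.map ⟨l, hl⟩).val :=
    roots_eq_of_natDegree_le_card_of_ne_zero (by simpa using hroot) (by simp [hpN]) hp
  have hsplits : p.Splits := splits_iff_card_roots.mpr (by simp [hroots, hpN])
  have h := resultant_eq_prod_eval p q n hqn hsplits
  rwa [hpN, hroots, prod_map_val, prod_map, Function.Embedding.coeFn_mk] at h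

noncomputable def laguerreCoeff (N : ℕ) (α : ℝ) (k : ℕ) : ℝ :=
  (-1 : ℝ) ^ k * (∏ i ∈ Icc (k + 1) N, (α + i)) / ((N - k)! * k !)

noncomputable def laguerrePoly (N : ℕ) (α : ℝ) : ℝ[X] :=
  ∑ k ∈ range (N + 1), C (laguerreCoeff N α k) * X ^ k

theorem eval_laguerrePoly (N : ℕ) (α x : ℝ) : (laguerrePoly N α).eval x = laguerre N α x := by
  simp [laguerrePoly, laguerre, laguerreCoeff, eval_finsetSum]

theorem coeff_laguerrePoly (N : ℕ) (α : ℝ) (k : ℕ) :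
    (laguerrePoly N α).coeff k = if k ≤ N then laguerreCoeff N α k else 0 := by
  simp [laguerrePoly, coeff_C_mul, coeff_X_pow]

theorem laguerreCoeff_self (N : ℕ) (α : ℝ) : laguerreCoeff N α N = (-1) ^ N / N ! := by
  simp [laguerreCoeff]

theorem natDegree_laguerrePoly (N : ℕ) (α : ℝ) : (laguerrePoly N α).natDegree = N := by
  refine natDegree_eq_of_le_of_coeff_ne_zero ?_ ?_
  · rw [natDegree_le_iff_coeff_eq_zero]
    intro k hk
    simp [coeff_laguerrePoly, not_le.mpr hk]
  · simp [coeff_laguerrePoly, laguerreCoeff_self, factorial_ne_zero]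

theorem leadingCoeff_laguerrePoly (N : ℕ) (α : ℝ) :
    (laguerrePoly N α).leadingCoeff = laguerreCoeff N α N := by
  rw [leadingCoeff, natDegree_laguerrePoly, coeff_laguerrePoly, if_pos le_rfl]

theorem laguerrePoly_ne_zero (N : ℕ) (α : ℝ) : laguerrePoly N α ≠ 0 := by
  rw [← leadingCoeff_ne_zero, leadingCoeff_laguerrePoly, laguerreCoeff_self]
  positivity

theorem laguerreCoeff_succ_left {N k : ℕ} (α : ℝ) (hk : k ≤ N) :
    ((N : ℝ) + 1 - k) * laguerreCoeff (N + 1) α k = (α + N + 1) * laguerreCoeff N α k := by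
  obtain ⟨m, rfl⟩ := Nat.exists_eq_add_of_le hk
  have hm : k + m + 1 - k = m + 1 := by omega
  simp only [laguerreCoeff, hm, add_tsub_cancel_left, prod_Icc_succ_top (by omega : k + 1 ≤ k + m + 1),
    factorial_succ]
  have := factorial_ne_zero m
  have := factorial_ne_zero k
  push_cast
  field_simp
  ring

theorem laguerreCoeff_succ_right {N k : ℕ} (α : ℝ) (hk : k < N) :
    (k + 1) * (α + k + 1) * laguerreCoeff N α (k + 1) = -((N : ℝ) - k) * laguerreCoeff N α k := by
  obtain ⟨m, rfl⟩ := Nat.exists_eq_add_of_lt hk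
  have hm : k + m + 1 - k = m + 1 := by omega
  have hm' : k + m + 1 - (k + 1) = m := by omega
  rw [laguerreCoeff, laguerreCoeff, hm, hm', Icc_eq_cons_Ioc (by omega : k + 1 ≤ k + m + 1), prod_cons,
    ← Icc_add_one_left_eq_Ioc, factorial_succ, factorial_succ]
  have := factorial_ne_zero m
  have := factorial_ne_zero k
  push_cast
  field_simp
  ring

theorem laguerreCoeff_succ_self (N : ℕ) (α : ℝ) :
    ((N : ℝ) + 1) * laguerreCoeff (N + 1) α (N + 1) = -laguerreCoeff N α N := by
  rw [laguerreCoeff_self, laguerreCoeff_self, factorial_succ]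
  have := factorial_ne_zero N
  push_cast
  field_simp
  ring

theorem laguerrePoly_recurrence (N : ℕ) (α : ℝ) :
    C ((N : ℝ) + 2) * laguerrePoly (N + 2) α
      = (C (α + 2 * N + 3) - X) * laguerrePoly (N + 1) α - C (α + N + 1) * laguerrePoly N α := by
  ext k
  simp only [sub_mul, coeff_sub, coeff_C_mul]
  rcases k with _ | j
  · simp only [mul_coeff_zero, coeff_X_zero, zero_mul, sub_zero, coeff_laguerrePoly, zero_le,
      if_true]
    have h₁ := laguerreCoeff_succ_left (N := N) α (zero_le _)
    have h₂ := laguerreCoeff_succ_left (N := N + 1) α (zero_le _)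
    push_cast at h₁ h₂ ⊢
    linear_combination h₂ - h₁
  rw [coeff_X_mul]
  obtain hj | hj | hj | hj : j + 1 ≤ N ∨ j = N ∨ j = N + 1 ∨ N + 2 < j + 1 := by omega
  · simp (disch := omega) only [coeff_laguerrePoly, if_pos]
    have h₁ := laguerreCoeff_succ_left α hj
    have h₂ := laguerreCoeff_succ_left (N := N + 1) α (by omega : j + 1 ≤ N + 1)
    have h₃ := laguerreCoeff_succ_right (N := N + 1) α (by omega : j < N + 1)
    have hd : (N : ℝ) + 1 - j ≠ 0 := by
      have : (j : ℝ) ≤ N := by exact_mod_cast (by omega : j ≤ N)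
      linarith
    refine mul_left_cancel₀ hd ?_
    push_cast at h₁ h₂ h₃ ⊢
    linear_combination (N + 2 : ℝ) * h₂ + h₃ - ((N : ℝ) + 1 - j) * h₁
  · subst j
    simp (disch := omega) only [coeff_laguerrePoly, if_pos, if_neg]
    have h₁ := laguerreCoeff_succ_left (N := N + 1) α le_rfl
    have h₂ := laguerreCoeff_succ_right (N := N + 1) α (lt_add_one N)
    push_cast at h₁ h₂ ⊢
    linear_combination (N + 2 : ℝ) * h₁ + h₂
  · subst j
    simp (disch := omega) only [coeff_laguerrePoly, if_pos, if_neg]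
    have := laguerreCoeff_succ_self (N + 1) α
    push_cast at this ⊢
    linear_combination this
  · simp (disch := omega) only [coeff_laguerrePoly, if_neg]
    ring

noncomputable def laguerreZeroProd (N : ℕ) (α : ℝ) : ℝ :=
  (-1) ^ (N * (N - 1) / 2) * ∏ i ∈ Icc 1 (N - 1), ((α + i) / ((N : ℝ) - i)) ^ i

theorem laguerreZeroProd_succ (N : ℕ) (α : ℝ) :
    laguerreZeroProd (N + 1) α = (-1) ^ N / N ! * (α + N) ^ N * laguerreZeroProd N α := by
  have hsign : (N + 1) * N / 2 = N * (N - 1) / 2 + N := by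
    rcases N with _ | N
    · rfl
    rw [add_tsub_cancel_right, show (N + 1 + 1) * (N + 1) = (N + 1) * N + 2 * (N + 1) by ring,
      Nat.add_mul_div_left _ _ two_pos]
  rw [laguerreZeroProd, laguerreZeroProd, prod_Icc_one_pow_eq_prod_range, prod_Icc_one_pow_eq_prod_range,
    add_tsub_cancel_right]
  push_cast
  simp only [div_pow, prod_div_distrib, prod_range_natCast_sub_pow_succ, hsign, pow_add]
  rw [prod_range_succ (fun i => (α + i) ^ i)]
  ring

theorem resultant_laguerrePoly_succ (N : ℕ) (α : ℝ) :
    ((N : ℝ) + 2) ^ (N + 1) * resultant (laguerrePoly (N + 2) α) (laguerrePoly (N + 1) α) (N + 2) (N + 1)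
      = (-(α + N + 1)) ^ (N + 1) * (laguerrePoly (N + 1) α).leadingCoeff ^ 2
        * resultant (laguerrePoly (N + 1) α) (laguerrePoly N α) (N + 1) N := by
  have hrec : C ((N : ℝ) + 2) * laguerrePoly (N + 2) α
      = C (-(α + N + 1)) * laguerrePoly N α + laguerrePoly (N + 1) α * (C (α + 2 * N + 3) - X) := by
    rw [laguerrePoly_recurrence, C_neg]
    ring
  have hdeg : (C (α + 2 * N + 3) - X).natDegree + (N + 1) ≤ N + 2 := by
    have : (C (α + 2 * N + 3) - X).natDegree ≤ 1 := by compute_degree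
    omega
  have hsign : Even ((N + 2) * (N + 1)) := by
    rw [mul_comm]
    exact even_mul_succ_self _
  rw [resultant_comm (laguerrePoly (N + 2) α), hsign.neg_one_pow, one_mul,
    ← resultant_C_mul_right, hrec, resultant_add_mul_right _ _ _ _ _ hdeg (natDegree_laguerrePoly _ _).le,
    resultant_C_mul_right, resultant_add_right_deg _ _ _ _ 2 (natDegree_laguerrePoly _ _).le,
    coeff_laguerrePoly, if_pos le_rfl, ← leadingCoeff_laguerrePoly, mul_assoc]

theorem resultant_laguerrePoly (N : ℕ) (α : ℝ) :
    resultant (laguerrePoly N α) (laguerrePoly (N - 1) α) N (N - 1)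
      = (laguerrePoly N α).leadingCoeff ^ (N - 1) * laguerreZeroProd N α := by
  rcases N with _ | N
  · simp [laguerreZeroProd]
  induction N with
  | zero => simp [coeff_laguerrePoly, laguerreCoeff, laguerreZeroProd]
  | succ N ih =>
    rw [add_tsub_cancel_right] at ih ⊢
    have hlead : ((N : ℝ) + 2) * (laguerrePoly (N + 1 + 1) α).leadingCoeff
        = -(laguerrePoly (N + 1) α).leadingCoeff := by
      rw [leadingCoeff_laguerrePoly, leadingCoeff_laguerrePoly]
      exact_mod_cast laguerreCoeff_succ_self (N + 1) α
    refine mul_left_cancel₀ (pow_ne_zero (N + 1) (by positivity : (N : ℝ) + 2 ≠ 0)) ?_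
    refine (resultant_laguerrePoly_succ N α).trans ?_
    have hpow : ((N : ℝ) + 2) ^ (N + 1) * (laguerrePoly (N + 1 + 1) α).leadingCoeff ^ (N + 1)
        = (-1) ^ (N + 1) * (laguerrePoly (N + 1) α).leadingCoeff ^ (N + 1) := by
      rw [← mul_pow, hlead, neg_pow]
    rw [ih, laguerreZeroProd_succ (N + 1), ← laguerreCoeff_self, ← leadingCoeff_laguerrePoly,
      neg_pow]
    push_cast
    linear_combination (-((laguerrePoly (N + 1) α).leadingCoeff * (α + (N + 1)) ^ (N + 1)
      * laguerreZeroProd (N + 1) α)) * hpow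

theorem prod_laguerre_pred_at_zeros_general (N : ℕ) (α : ℝ)
    (l : Fin N → ℝ) (hmono : StrictMono l)
    (hzero : ∀ i, laguerre N α (l i) = 0) :
    ∏ i, laguerre (N - 1) α (l i)
      = (-1 : ℝ) ^ (N * (N - 1) / 2)
          * ∏ i ∈ Finset.Icc 1 (N - 1), ((α + i) / ((N : ℝ) - i)) ^ i := by
  have h := resultant_eq_leadingCoeff_pow_mul_prod_eval (laguerrePoly_ne_zero N α)
    (natDegree_laguerrePoly N α) (natDegree_laguerrePoly (N - 1) α).le hmono.injective
    (by simpa [eval_laguerrePoly] using hzero)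
  rw [resultant_laguerrePoly] at h
  simp only [eval_laguerrePoly] at h
  exact (mul_left_cancel₀ (pow_ne_zero _ (leadingCoeff_ne_zero.mpr (laguerrePoly_ne_zero N α))) h).symm

/-- `∏_{i=1}^N L_{N−1}^{(α)}(l_{N,i}) = (−1)^{N(N−1)/2} ∏_{i=1}^{N−1} ((α+i)/(N−i))^i`. -/
theorem prod_laguerre_pred_at_zeros (N : ℕ) (hN : 2 ≤ N) (α : ℝ) (hα : -1 < α)
    (l : Fin N → ℝ) (hmono : StrictMono l) (hpos : ∀ i, 0 < l i)
    (hzero : ∀ i, laguerre N α (l i) = 0)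
    (hall : ∀ x : ℝ, laguerre N α x = 0 → ∃ i, x = l i) :
    ∏ i, laguerre (N - 1) α (l i)
      = (-1 : ℝ) ^ (N * (N - 1) / 2)
          * ∏ i ∈ Finset.Icc 1 (N - 1), ((α + i) / ((N : ℝ) - i)) ^ i :=
  prod_laguerre_pred_at_zeros_general N α l hmono hzero
end
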